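/- Let G be a graph, x ∈ V(G), and S ⊆ V(G) \ {x} such that x and S are k-linked in G. If S has a subset T of size k−1 such that x and T are (k−1)-linked, then there exists a vertex s ∈ S \ T such that x and T ∪ {s} are k-linked. -/

import Mathlib

/-- A vertex `x` and a set `S ⊆ V(G) \ {x}` are `k`-linked: there are `k` paths
from `x` to `k` distinct vertices of `S`, pairwise disjoint except at `x`, each
meeting `S` in exactly one vertex. -/
def VertexLinked {V : Type*} (G : SimpleGraph V) (k : ℕ) (x : V) (S : Set V) : Prop :=
  ∃ (b : Fin k → V) (P : ∀ i, G.Walk x (b i)),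
    Function.Injective b ∧ (∀ i, b i ∈ S) ∧
    (∀ i, (P i).IsPath) ∧
    (∀ i, ∀ y ∈ (P i).support, y ∈ S → y = b i) ∧
    (∀ i j, i ≠ j → ∀ y, y ∈ (P i).support → y ∈ (P j).support → y = x)

/-!
Add to `G` an apex vertex joined to `S \ T`. A set of vertices separating `x` from `T` and the
apex has at least `k` elements: if it contains the apex, it also meets each of the `k - 1` paths
to `T`; otherwise it meets each of the `k` paths to `S`, extended to the apex when they end
outside `T`. By the fan version of Menger's theorem there are then `k` paths from `x` to `T` and
the apex, and on the one ending at the apex the last vertex before it is the required `s`.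

Menger's theorem is proved by induction on the number of edges, as in Diestel's first proof:
contract an edge `xy`; if the contraction has no separator of fewer than `k` vertices, lift its
`k` disjoint paths to `G`; otherwise the preimage `X` of such a separator contains `x` and `y` and
has at most `k` vertices, and `k` disjoint `A`–`X` and `B`–`X` paths in `G - xy` glue along `X`.
-/

lemma Set.le_ncard_of_injective {α : Type*} {s : Set α} {k : ℕ} (f : Fin k → α)
    (hf : Function.Injective f) (hs : ∀ i, f i ∈ s) (hfin : s.Finite) : k ≤ s.ncard := by
  simpa using Set.ncard_le_ncard_of_injOn f (s := Set.univ) (fun i _ => hs i) hf.injOn hfin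

namespace SimpleGraph

variable {V : Type*} {G H : SimpleGraph V} {A B C X : Set V} {k : ℕ}

def Separates (G : SimpleGraph V) (A B C : Set V) : Prop :=
  ∀ ⦃a⦄, a ∈ A → ∀ ⦃b⦄, b ∈ B → ∀ p : G.Walk a b, ∃ c ∈ C, c ∈ p.support

lemma Separates.symm (h : G.Separates A B C) : G.Separates B A C := fun _ hb _ ha p => by
  simpa using h ha hb p.reverse

/-- Each path meets `B` only at its end, which is what lets an `A`–`X` and a `B`–`X` family be
glued along a separator `X`. -/
def HasDisjointPaths (G : SimpleGraph V) (A B : Set V) (k : ℕ) : Prop :=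
  ∃ (a b : Fin k → V) (P : ∀ i, G.Walk (a i) (b i)), (∀ i, a i ∈ A) ∧ (∀ i, b i ∈ B) ∧
    (∀ i, (P i).IsPath) ∧ (∀ i, ∀ z ∈ (P i).support, z ∈ B → z = b i) ∧
    Pairwise fun i j => (P i).support.Disjoint (P j).support

namespace Walk

lemma exists_isPath_to_first_mem {a b : V} (p : G.Walk a b) (h : ∃ c ∈ X, c ∈ p.support) :
    ∃ c ∈ X, ∃ q : G.Walk a c, q.IsPath ∧ q.support ⊆ p.support ∧
      ∀ z ∈ q.support, z ∈ X → z = c := by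
  classical
  suffices ∃ c ∈ X, ∃ q : G.Walk a c, q.support ⊆ p.support ∧ ∀ z ∈ q.support, z ∈ X → z = c by
    obtain ⟨c, hc, q, hqp, hqX⟩ := this
    exact ⟨c, hc, q.bypass, q.bypass_isPath,
      List.Subset.trans q.support_bypass_subset_support hqp,
      fun z hz => hqX z (q.support_bypass_subset_support hz)⟩
  induction p with
  | nil =>
    exact ⟨_, by simpa using h, nil, by simp, by simp⟩
  | @cons a m b hadj p ih =>
    by_cases ha : a ∈ X
    · exact ⟨a, ha, nil, by simp, by simp⟩
    obtain ⟨c, hc, hcp⟩ := h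
    rw [support_cons, List.mem_cons] at hcp
    obtain ⟨c, hc, q, hqp, hqX⟩ := ih ⟨c, hc, hcp.resolve_left (by rintro rfl; exact ha hc)⟩
    refine ⟨c, hc, cons hadj q, by simpa using List.subset_cons_of_subset _ hqp, ?_⟩
    simp only [support_cons, List.mem_cons, forall_eq_or_imp]
    exact ⟨fun h => absurd h ha, hqX⟩

lemma injective_of_pairwise_disjoint_support {ι : Type*} {a b : ι → V}
    {P : ∀ i, G.Walk (a i) (b i)} (h : Pairwise fun i j => (P i).support.Disjoint (P j).support) :
    Function.Injective b := by
  intro i j hij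
  by_contra hne
  exact h hne (P i).end_mem_support (by rw [hij]; exact (P j).end_mem_support)

end Walk

open Walk

lemma Separates.eq_of_mem_support (hX : G.Separates A B X) {a b c d z : V} (ha : a ∈ A)
    (hb : b ∈ B) {p : G.Walk a c} {q : G.Walk b d} (hp : p.IsPath) (hq : q.IsPath)
    (hpX : ∀ z ∈ p.support, z ∈ X → z = c) (hqX : ∀ z ∈ q.support, z ∈ X → z = d)
    (hzp : z ∈ p.support) (hzq : z ∈ q.support) : z = c ∧ z = d := by
  classical
  by_cases hzX : z ∈ X
  · exact ⟨hpX z hzp hzX, hqX z hzq hzX⟩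
  have before : ∀ {u e : V} (r : G.Walk u e), r.IsPath → (∀ w ∈ r.support, w ∈ X → w = e) →
      ∀ hz : z ∈ r.support, ∀ w ∈ (r.takeUntil z hz).support, w ∉ X := by
    intro u e r hr hrX hz w hw hwX
    obtain rfl := hrX w (r.support_takeUntil_subset_support hz hw) hwX
    exact r.endpoint_notMem_support_takeUntil hr hz (fun h => hzX (h ▸ hwX)) hw
  obtain ⟨w, hwX, hw⟩ := hX ha hb ((p.takeUntil z hzp).append (q.takeUntil z hzq).reverse)
  rw [mem_support_append_iff, support_reverse, List.mem_reverse] at hw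
  exact (hw.elim (before p hp hpX hzp w · hwX) (before q hq hqX hzq w · hwX)).elim

namespace HasDisjointPaths

lemma of_walks {a b : Fin k → V} (P : ∀ i, G.Walk (a i) (b i)) (ha : ∀ i, a i ∈ A)
    (hb : ∀ i, b i ∈ B) (hP : Pairwise fun i j => (P i).support.Disjoint (P j).support) :
    G.HasDisjointPaths A B k := by
  choose c hc Q hQ hQP hQB using
    fun i => (P i).exists_isPath_to_first_mem ⟨b i, hb i, end_mem_support _⟩
  exact ⟨a, c, Q, ha, hc, hQ, hQB, fun i j hij z hi hj => hP hij (hQP i hi) (hQP j hj)⟩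

lemma mono (hGH : G ≤ H) (h : G.HasDisjointPaths A B k) : H.HasDisjointPaths A B k := by
  obtain ⟨a, b, P, ha, hb, -, -, hP⟩ := h
  exact of_walks (fun i => (P i).mapLe hGH) ha hb fun i j hij => by
    simpa only [support_mapLe_eq_support] using hP hij

lemma of_le_ncard_inter [Finite V] (h : k ≤ (A ∩ B).ncard) : G.HasDisjointPaths A B k := by
  let e := Finite.equivFin ↥(A ∩ B)
  let a : Fin k → V := fun i => e.symm (Fin.castLE (by simpa using h) i)
  have ha : Function.Injective a :=
    Subtype.val_injective.comp (e.symm.injective.comp (Fin.castLE_injective _))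
  exact of_walks (fun i => (nil : G.Walk (a i) (a i))) (fun i => (e.symm _).2.1)
    (fun i => (e.symm _).2.2) fun i j hij => by simpa [eq_comm] using ha.ne hij

end HasDisjointPaths

lemma separates_inter_of_edgeSet_eq_empty (hG : G.edgeSet = ∅) : G.Separates A B (A ∩ B) := by
  rintro a ha b hb (_ | ⟨hadj, _⟩)
  · exact ⟨a, ⟨ha, hb⟩, by simp⟩
  · simp [← mem_edgeSet, hG] at hadj

section Map

variable {W : Type*} {f : V → W}

lemma Walk.exists_map_support_subset {a b : V} (p : G.Walk a b) :
    ∃ q : (G.map f).Walk (f a) (f b), q.support ⊆ p.support.map f := by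
  induction p with
  | nil => exact ⟨nil, by simp⟩
  | @cons a m b hadj p ih =>
    obtain ⟨q, hq⟩ := ih
    by_cases hf : f a = f m
    · exact ⟨q.copy hf.symm rfl, by simpa using List.subset_cons_of_subset _ hq⟩
    · exact ⟨cons (map_adj_apply' hadj hf) q, by simpa using List.cons_subset_cons _ hq⟩

lemma Walk.exists_walk_of_map
    (hf : ∀ u v, f u = f v → ∃ p : G.Walk u v, ∀ z ∈ p.support, f z = f u)
    {a' b' : W} (q : (G.map f).Walk a' b') {a b : V} (ha : f a = a') (hb : f b = b') :
    ∃ p : G.Walk a b, ∀ z ∈ p.support, f z ∈ q.support := by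
  induction q generalizing a with
  | nil =>
    obtain ⟨p, hp⟩ := hf a b (ha.trans hb.symm)
    exact ⟨p, fun z hz => by simp [hp z hz, ha]⟩
  | cons hadj q ih =>
    obtain ⟨-, u, v, huv, rfl, rfl⟩ := hadj
    obtain ⟨p₁, hp₁⟩ := hf a u ha
    obtain ⟨p₂, hp₂⟩ := ih rfl hb
    refine ⟨p₁.append (cons huv p₂), fun z hz => ?_⟩
    rw [mem_support_append_iff, support_cons, List.mem_cons] at hz
    rcases hz with hz | hz | hz
    · simp [hp₁ z hz, ha]
    · simp [hz]
    · exact List.mem_cons_of_mem _ (hp₂ z hz)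

lemma Separates.preimage_of_map {C : Set W} (h : (G.map f).Separates (f '' A) (f '' B) C) :
    G.Separates A B (f ⁻¹' C) := by
  intro a ha b hb p
  obtain ⟨q, hq⟩ := p.exists_map_support_subset (f := f)
  obtain ⟨c, hc, hcq⟩ := h ⟨a, ha, rfl⟩ ⟨b, hb, rfl⟩ q
  obtain ⟨z, hz, rfl⟩ := List.mem_map.1 (hq hcq)
  exact ⟨z, hc, hz⟩

lemma HasDisjointPaths.of_map
    (hf : ∀ u v, f u = f v → ∃ p : G.Walk u v, ∀ z ∈ p.support, f z = f u)
    (h : (G.map f).HasDisjointPaths (f '' A) (f '' B) k) : G.HasDisjointPaths A B k := by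
  obtain ⟨a', b', P, ha', hb', -, -, hP⟩ := h
  choose a ha hfa using ha'
  choose b hb hfb using hb'
  choose Q hQ using fun i => (P i).exists_walk_of_map hf (hfa i) (hfb i)
  exact HasDisjointPaths.of_walks Q ha hb fun i j hij z hi hj => hP hij (hQ i z hi) (hQ j z hj)

lemma ncard_edgeSet_map_lt [Finite V] {x y : V} (hxy : G.Adj x y) (hf : f x = f y) :
    (G.map f).edgeSet.ncard < G.edgeSet.ncard := by
  have hsub : (G.map f).edgeSet ⊆ Sym2.map f '' (G.edgeSet \ {s(x, y)}) := by
    intro e he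
    induction e using Sym2.ind with
    | _ a b =>
      obtain ⟨hab, u, v, huv, rfl, rfl⟩ := he
      refine ⟨s(u, v), ⟨huv, ?_⟩, rfl⟩
      rintro h
      rcases Sym2.eq_iff.1 h with ⟨rfl, rfl⟩ | ⟨rfl, rfl⟩
      exacts [hab hf, hab hf.symm]
  calc (G.map f).edgeSet.ncard ≤ (Sym2.map f '' (G.edgeSet \ {s(x, y)})).ncard :=
        Set.ncard_le_ncard hsub (Set.toFinite _ |>.image _)
    _ ≤ (G.edgeSet \ {s(x, y)}).ncard := Set.ncard_image_le (Set.toFinite _)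
    _ < G.edgeSet.ncard := Set.ncard_sdiff_singleton_lt_of_mem hxy (Set.toFinite _)

end Map

lemma exists_walk_of_update_eq [DecidableEq V] {x y : V} (hxy : G.Adj x y) (u v : V)
    (h : Function.update id y x u = Function.update id y x v) :
    ∃ p : G.Walk u v, ∀ z ∈ p.support, Function.update id y x z = Function.update id y x u := by
  have hne := hxy.ne
  simp only [Function.update_apply, id] at h ⊢
  by_cases hu : u = y <;> by_cases hv : v = y <;> simp only [hu, hv, if_true, if_false] at h
  · subst hu hv; exact ⟨nil, by simp⟩
  · subst hu h; exact ⟨cons hxy.symm nil, by simp [hne]⟩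
  · subst hv h; exact ⟨cons hxy nil, by simp [hne]⟩
  · subst h; exact ⟨nil, by simp⟩

lemma Separates.of_deleteEdges {x y : V} (hxy : x ≠ y) (hX : G.Separates A B X) (hx : x ∈ X)
    (hy : y ∈ X) (hW : (G.deleteEdges {s(x, y)}).Separates A X C) : G.Separates A B C := by
  intro a ha b hb p
  obtain ⟨c, hc, q, -, hqp, hqX⟩ := p.exists_isPath_to_first_mem (hX ha hb p)
  have he : s(x, y) ∉ q.edges := fun he =>
    hxy ((hqX x (q.fst_mem_support_of_mem_edges he) hx).trans
      (hqX y (q.snd_mem_support_of_mem_edges he) hy).symm)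
  obtain ⟨w, hw, hwq⟩ := hW ha hc (q.toDeleteEdge _ he)
  exact ⟨w, hw, hqp (by simpa using hwq)⟩

lemma HasDisjointPaths.glue [Finite V] (hX : G.Separates A B X) (hXk : X.ncard ≤ k)
    (hA : G.HasDisjointPaths A X k) (hB : G.HasDisjointPaths B X k) :
    G.HasDisjointPaths A B k := by
  obtain ⟨a, c, L, ha, hc, hL, hLX, hLd⟩ := hA
  obtain ⟨b, d, R, hb, hd, hR, hRX, hRd⟩ := hB
  have hcinj := injective_of_pairwise_disjoint_support hLd
  have hdinj := injective_of_pairwise_disjoint_support hRd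
  have hrange : Set.range d = X := Set.eq_of_subset_of_ncard_le (Set.range_subset_iff.2 hd)
    (by rwa [Set.ncard_range_of_injective hdinj, Nat.card_fin]) (Set.toFinite _)
  choose σ hσ using fun i => hrange.symm ▸ hc i
  have hσinj : Function.Injective σ := fun i j h => hcinj (by rw [← hσ i, ← hσ j, h])
  have cross : ∀ i j z, z ∈ (L i).support → z ∈ (R (σ j)).support → i = j := by
    intro i j z hi hj
    obtain ⟨h₁, h₂⟩ := hX.eq_of_mem_support (ha i) (hb (σ j)) (hL i) (hR (σ j)) (hLX i)
      (hRX (σ j)) hi hj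
    exact hcinj (by rw [← h₁, h₂, hσ])
  refine HasDisjointPaths.of_walks (fun i => (L i).append ((R (σ i)).reverse.copy (hσ i) rfl))
    ha (fun i => hb (σ i)) fun i j hij z hzi hzj => ?_
  simp only [mem_support_append_iff, support_copy, support_reverse, List.mem_reverse] at hzi hzj
  rcases hzi with hzi | hzi <;> rcases hzj with hzj | hzj
  · exact hLd hij hzi hzj
  · exact hij (cross i j z hzi hzj)
  · exact hij (cross j i z hzj hzi).symm
  · exact hRd (hσinj.ne hij) hzi hzj

lemma exists_separator_of_separates_map_update [Finite V] [DecidableEq V] {x y : V}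
    (hxy : x ≠ y) (h : ∀ C, G.Separates A B C → k ≤ C.ncard)
    (hC : (G.map (Function.update id y x)).Separates
      (Function.update id y x '' A) (Function.update id y x '' B) C) (hCk : C.ncard < k) :
    ∃ X, G.Separates A B X ∧ x ∈ X ∧ y ∈ X ∧ X.ncard ≤ k := by
  have hX := hC.preimage_of_map
  have hsub : Function.update id y x ⁻¹' C ⊆ insert y C := fun z hz => by
    by_cases hz' : z = y
    · simp [hz']
    · simpa [hz'] using hz
  have hxC : x ∈ C := by
    by_contra hxC
    have : Function.update id y x ⁻¹' C ⊆ C := fun z hz =>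
      (hsub hz).resolve_left fun hz' => hxC (by simpa [hz'] using hz)
    have := (h _ hX).trans (Set.ncard_le_ncard this)
    omega
  refine ⟨_, hX, by simpa [hxy] using hxC, by simpa using hxC, ?_⟩
  have := (Set.ncard_le_ncard hsub).trans (Set.ncard_insert_le y C)
  omega

theorem hasDisjointPaths_of_le_ncard_separator [Finite V] (G : SimpleGraph V) (A B : Set V)
    (k : ℕ) (h : ∀ C, G.Separates A B C → k ≤ C.ncard) : G.HasDisjointPaths A B k := by
  obtain hE | ⟨e, he⟩ := G.edgeSet.eq_empty_or_nonempty
  · exact .of_le_ncard_inter (h _ (separates_inter_of_edgeSet_eq_empty hE))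
  induction e using Sym2.ind with
  | _ x y =>
  classical
  have hxy : G.Adj x y := he
  -- `G.map f` is the contraction `G / xy`, with `y` left isolated
  let f := Function.update id y x
  by_cases hsmall : ∃ C, (G.map f).Separates (f '' A) (f '' B) C ∧ C.ncard < k
  · obtain ⟨C, hC, hCk⟩ := hsmall
    obtain ⟨X, hX, hx, hy, hXk⟩ := exists_separator_of_separates_map_update hxy.ne h hC hCk
    refine .glue hX hXk ?_ ?_ <;> refine .mono (G.deleteEdges_le {s(x, y)}) ?_
    · exact hasDisjointPaths_of_le_ncard_separator _ _ _ k fun W hW =>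
        h W (hX.of_deleteEdges hxy.ne hx hy hW)
    · exact hasDisjointPaths_of_le_ncard_separator _ _ _ k fun W hW =>
        h W (hX.symm.of_deleteEdges hxy.ne hx hy hW).symm
  · push Not at hsmall
    exact .of_map (exists_walk_of_update_eq hxy)
      (hasDisjointPaths_of_le_ncard_separator (G.map f) _ _ k hsmall)
termination_by G.edgeSet.ncard
decreasing_by
  all_goals first
    | rw [edgeSet_deleteEdges]; exact Set.ncard_sdiff_singleton_lt_of_mem he
    | exact ncard_edgeSet_map_lt hxy (by simp [hxy.ne])

lemma Separates.of_deleteIncidenceSet {x : V} (hxB : x ∉ B)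
    (h : (G.deleteIncidenceSet x).Separates (G.neighborSet x) B C) :
    G.Separates {x} B (C \ {x}) := by
  classical
  rintro a rfl b hb p
  obtain ⟨d, hd, q, hq⟩ := exists_eq_cons_of_ne (by rintro rfl; exact hxB hb) p.bypass
  have hxq : a ∉ q.support := ((cons_isPath_iff hd q).1 (hq ▸ p.bypass_isPath)).2
  obtain ⟨c, hc, hcq⟩ := h hd hb <| q.transfer _ fun e he => by
    rw [edgeSet_deleteIncidenceSet]
    exact ⟨q.edges_subset_edgeSet he, fun hex => hxq (mem_support_of_mem_edges he hex.2)⟩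
  rw [support_transfer] at hcq
  refine ⟨c, ⟨hc, fun h => hxq (h ▸ hcq)⟩, p.support_bypass_subset_support ?_⟩
  rw [hq]
  exact List.mem_cons_of_mem _ hcq

theorem vertexLinked_of_le_ncard_separator [Finite V] {x : V} (hxB : x ∉ B)
    (h : ∀ C, x ∉ C → G.Separates {x} B C → k ≤ C.ncard) : VertexLinked G k x B := by
  classical
  obtain ⟨a, b, P, ha, hb, hP, hPB, hPd⟩ :=
    hasDisjointPaths_of_le_ncard_separator (G.deleteIncidenceSet x) (G.neighborSet x) B k
      fun C hC => (h _ (by simp) (hC.of_deleteIncidenceSet hxB)).trans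
        (Set.ncard_le_ncard Set.sdiff_subset)
  replace ha : ∀ i, G.Adj x (a i) := ha
  have hxP : ∀ i, x ∉ (P i).support := fun i hx => (deleteIncidenceSet_adj.1
    (((P i).takeUntil x hx).adj_penultimate (not_nil_of_ne (ha i).ne.symm))).2.2 rfl
  refine ⟨b, fun i => cons (ha i) ((P i).mapLe (G.deleteIncidenceSet_le x)),
    injective_of_pairwise_disjoint_support hPd, hb, fun i => ?_, fun i z hz hzB => ?_,
    fun i j hij z hzi hzj => ?_⟩
  · simp only [cons_isPath_iff, isPath_mapLe, support_mapLe_eq_support]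
    exact ⟨hP i, hxP i⟩
  · simp only [support_cons, support_mapLe_eq_support, List.mem_cons] at hz
    exact hz.elim (fun hz => absurd (hz ▸ hzB) hxB) (hPB i z · hzB)
  · simp only [support_cons, support_mapLe_eq_support, List.mem_cons] at hzi hzj
    rcases hzi with hzi | hzi
    · exact hzi
    rcases hzj with hzj | hzj
    · exact hzj
    exact (hPd hij hzi hzj).elim

theorem _root_.VertexLinked.le_ncard_of_separates [Finite V] {x : V} {S : Set V}
    (h : VertexLinked G k x S) (hxC : x ∉ C) (hC : G.Separates {x} S C) : k ≤ C.ncard := by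
  obtain ⟨b, P, -, hbS, -, -, hPd⟩ := h
  choose c hc hcP using fun i => hC rfl (hbS i) (P i)
  refine Set.le_ncard_of_injective c (fun i j hij => by_contra fun hne => ?_) hc (Set.toFinite _)
  exact hxC (hPd i j hne (c i) (hcP i) (hij ▸ hcP j) ▸ hc i)

section Apex

variable {W : Set V}

def withApex (G : SimpleGraph V) (W : Set V) : SimpleGraph (Option V) where
  Adj
    | some a, some b => G.Adj a b
    | some a, none => a ∈ W
    | none, some b => b ∈ W
    | none, none => False
  symm := ⟨by
    rintro (_ | a) (_ | b) h
    exacts [h, h, h, h.symm]⟩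
  loopless := ⟨by
    rintro (_ | a) h
    exacts [h, h.ne rfl]⟩

lemma Walk.exists_withApex_support_eq {a b : V} (p : G.Walk a b) :
    ∃ q : (G.withApex W).Walk (some a) (some b), q.support = p.support.map some := by
  induction p with
  | nil => exact ⟨nil, rfl⟩
  | cons h p ih =>
    obtain ⟨q, hq⟩ := ih
    exact ⟨cons (show (G.withApex W).Adj (some _) (some _) from h) q, by simp [hq]⟩

lemma Walk.exists_support_map_some_eq :
    ∀ {a b : V} (p : (G.withApex W).Walk (some a) (some b)),
      none ∉ p.support → ∃ q : G.Walk a b, q.support.map some = p.support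
  | _, _, .nil, _ => ⟨nil, rfl⟩
  | _, _, .cons (v := some _) h p, hp => by
    obtain ⟨q, hq⟩ := exists_support_map_some_eq p (by simp_all)
    exact ⟨cons (show G.Adj _ _ from h) q, by simp [hq]⟩
  | _, _, .cons (v := none) _ p, hp => absurd (by simp) hp

lemma Walk.exists_isPath_of_withApex {a : V} {o : Option V}
    (p : (G.withApex W).Walk (some a) o)
    (hp : p.IsPath) (hnone : none ∈ p.support → o = none) :
    ∃ v, ∃ q : G.Walk a v, q.IsPath ∧ (∀ z ∈ q.support, some z ∈ p.support) ∧
      (o = some v ∨ o = none ∧ v ∈ W) := by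
  have pull : ∀ {b} (r : (G.withApex W).Walk (some a) (some b)), r.IsPath → none ∉ r.support →
      ∃ q : G.Walk a b, q.IsPath ∧ ∀ z ∈ q.support, some z ∈ r.support := by
    intro b r hr hn
    obtain ⟨q, hq⟩ := r.exists_support_map_some_eq hn
    refine ⟨q, ?_, fun z hz => hq ▸ List.mem_map_of_mem hz⟩
    rw [isPath_def, ← List.nodup_map_iff (Option.some_injective V), hq]
    exact hr.support_nodup
  cases o with
  | some b =>
    obtain ⟨q, hq, hqp⟩ := pull p hp fun h => by simpa using hnone h
    exact ⟨b, q, hq, hqp, .inl rfl⟩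
  | none =>
    obtain ⟨m, hm, r, hr⟩ := exists_eq_cons_of_ne (by simp) p.reverse
    have hr' := (cons_isPath_iff hm r).1 (hr ▸ hp.reverse)
    cases m with
    | none => exact hm.elim
    | some s =>
      obtain ⟨q, hq, hqr⟩ := pull r.reverse hr'.1.reverse (by simpa using hr'.2)
      refine ⟨s, q, hq, fun z hz => ?_, .inr ⟨rfl, hm⟩⟩
      have : some z ∈ p.reverse.support := by
        rw [hr, support_cons]
        exact List.mem_cons_of_mem _ (by simpa using hqr z hz)
      simpa using this

lemma le_ncard_of_separates_withApex [Finite V] {x : V} {S T : Set V} {C : Set (Option V)}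
    (hk : 1 ≤ k) (hS : VertexLinked G k x S) (hT : VertexLinked G (k - 1) x T) (hxC : some x ∉ C)
    (hC : (G.withApex (S \ T)).Separates {some x} (insert none (some '' T)) C) :
    k ≤ C.ncard := by
  have hsepT : G.Separates {x} T (some ⁻¹' C) := by
    rintro _ rfl t ht p
    obtain ⟨q, hq⟩ := p.exists_withApex_support_eq (W := S \ T)
    obtain ⟨c, hc, hcp⟩ := hC rfl (Set.mem_insert_of_mem _ ⟨t, ht, rfl⟩) q
    rw [hq, List.mem_map] at hcp
    obtain ⟨z, hz, rfl⟩ := hcp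
    exact ⟨z, hc, hz⟩
  have hcard : (some ⁻¹' C).ncard ≤ (C \ {none}).ncard := by
    rw [← Set.ncard_image_of_injective _ (Option.some_injective V)]
    exact Set.ncard_le_ncard (by rintro _ ⟨z, hz, rfl⟩; exact ⟨hz, by simp⟩)
  by_cases hn : none ∈ C
  · have := hT.le_ncard_of_separates hxC hsepT
    have := Set.ncard_sdiff_singleton_add_one hn
    omega
  refine (hS.le_ncard_of_separates hxC ?_).trans
    (hcard.trans (Set.ncard_le_ncard Set.sdiff_subset))
  rintro _ rfl s hs p
  by_cases hsT : s ∈ T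
  · exact hsepT rfl hsT p
  have hadj : (G.withApex (S \ T)).Adj (some s) none := ⟨hs, hsT⟩
  obtain ⟨q, hq⟩ := p.exists_withApex_support_eq (W := S \ T)
  obtain ⟨c, hc, hcp⟩ := hC rfl (Set.mem_insert _ _) (q.concat hadj)
  rw [support_concat, List.mem_append, List.mem_singleton, hq, List.mem_map] at hcp
  obtain ⟨z, hz, rfl⟩ := hcp.resolve_right (by rintro rfl; exact hn hc)
  exact ⟨z, hc, hz⟩

lemma exists_vertexLinked_of_withApex [Finite V] {x : V} {T : Set V} (hxW : x ∉ W)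
    (hWT : Disjoint W T) (hTk : T.ncard < k)
    (h : VertexLinked (G.withApex W) k (some x) (insert none (some '' T))) :
    ∃ s ∈ W, VertexLinked G k x (T ∪ {s}) := by
  obtain ⟨b, P, hb, hbB, hP, hPB, hPd⟩ := h
  choose v Q hQ hQP hv using fun i => (P i).exists_isPath_of_withApex (hP i)
    fun hn => (hPB i none hn (Set.mem_insert _ _)).symm
  obtain ⟨i₀, hi₀⟩ : ∃ i₀, b i₀ = none := by
    by_contra! hne
    have := Set.le_ncard_of_injective b hb (fun i => (hbB i).resolve_left (hne i))
      (Set.toFinite _)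
    rw [Set.ncard_image_of_injective _ (Option.some_injective V)] at this
    omega
  have hsome : ∀ i ≠ i₀, b i = some (v i) := fun i hi =>
    (hv i).resolve_right fun h => hi (hb (h.1.trans hi₀.symm))
  have hvT : ∀ i ≠ i₀, v i ∈ T := fun i hi => by simpa [hsome i hi] using hbB i
  have hv₀ : v i₀ ∈ W := ((hv i₀).resolve_left (by simp [hi₀])).2
  have hne₀ : ∀ i ≠ i₀, v i ≠ v i₀ := fun i hi h => hWT.ne_of_mem hv₀ (hvT i hi) h.symm
  have hQ₀ : some (v i₀) ∈ (P i₀).support := hQP i₀ _ (Q i₀).end_mem_support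
  refine ⟨v i₀, hv₀, v, Q, fun i j hij => ?_, fun i => ?_, hQ, fun i z hz hzT => ?_,
    fun i j hij z hi hj => Option.some_injective V (hPd i j hij _ (hQP i z hi) (hQP j z hj))⟩
  · by_cases hi : i = i₀ <;> by_cases hj : j = i₀
    · rw [hi, hj]
    · exact absurd (hi ▸ hij).symm (hne₀ j hj)
    · exact absurd (hj ▸ hij) (hne₀ i hi)
    · exact hb (by rw [hsome i hi, hsome j hj, hij])
  · rcases eq_or_ne i i₀ with rfl | hi
    exacts [Or.inr rfl, Or.inl (hvT i hi)]
  · rcases hzT with hzT | rfl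
    · have := hPB i _ (hQP i z hz) (Set.mem_insert_of_mem _ ⟨z, hzT, rfl⟩)
      rcases eq_or_ne i i₀ with rfl | hi
      · simp [hi₀] at this
      · exact Option.some_injective V (this.trans (hsome i hi))
    · rcases eq_or_ne i i₀ with rfl | hi
      · rfl
      · have := Option.some_injective V (hPd i i₀ hi _ (hQP i _ hz) hQ₀)
        exact absurd (this ▸ hv₀) hxW

end Apex

end SimpleGraph

/-- Perfect's Theorem. -/
theorem perfect_theorem {V : Type*} [Fintype V] (G : SimpleGraph V)
    (k : ℕ) (hk : 1 ≤ k) (x : V) (S T : Set V)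
    (hxS : x ∉ S) (hTS : T ⊆ S) (hTcard : T.ncard = k - 1)
    (hSk : VertexLinked G k x S)
    (hTk : VertexLinked G (k - 1) x T) :
    ∃ s ∈ S \ T, VertexLinked G k x (T ∪ {s}) := by
  have hxT : x ∉ T := fun h => hxS (hTS h)
  have hlinked : VertexLinked (G.withApex (S \ T)) k (some x) (insert none (some '' T)) :=
    SimpleGraph.vertexLinked_of_le_ncard_separator (by simpa using hxT)
      fun C hxC hC => SimpleGraph.le_ncard_of_separates_withApex hk hSk hTk hxC hC
  exact SimpleGraph.exists_vertexLinked_of_withApex (fun h => hxS h.1) Set.disjoint_sdiff_left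
    (by omega) hlinked
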